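/- The one-sided process {X̃_n}_{n=-∞}^0 has the same finite-dimensional distributions as {X_n}: for all n ≥ 0 and all x_{-n}^0 ∈ {0,1}^{n+1}, P(X̃_{-n}^0 = x_{-n}^0) = P(X_{-n}^0 = x_{-n}^0). In particular, X̃ is stationary. -/

import Mathlib

/-!
Poincaré recurrence makes every `λ_k` finite almost surely. On the event `λ_n = m`, shifting `ω`
by `m` moves `X_0^{λ_n}` to `X_{-m}^0`, where it is read backwards: the new past begins with
`X̃_{-n}^0`, and its backward recurrence times `λ̂_k` are the forward ones `λ_k` for `k ≤ n`, so
`λ̂_n = m`. As the shift preserves `μ` and the events `{λ̂_n = m}` are disjoint,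
`P(X̃_{-n}^0 ∈ B) ≤ P(X_{-n}^0 ∈ B)` for every `B`. Both sides are probability distributions, so
they agree, and `X̃` inherits the stationarity of `X`.
-/

open MeasureTheory Filter Finset

/-- Two-sided binary sequences: the sample space of the process `X_n(ω) = ω n`. -/
abbrev BSeq := ℤ → Bool

/-- The left shift on two-sided sequences. -/
def shift : BSeq → BSeq := fun ω n => ω (n + 1)

/-- The recurrence stopping times `λ_k`:  `λ_0 = 0`,
`λ_{k+1} = λ_k + min {t > 0 : X_t^{λ_k + t} = X_0^{λ_k}}`. -/
noncomputable def lam : ℕ → BSeq → ℕ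
  | 0, _ => 0
  | k + 1, ω =>
      lam k ω +
        sInf {t : ℕ | 0 < t ∧ ∀ i : ℕ, i ≤ lam k ω → ω ((t : ℤ) + (i : ℤ)) = ω (i : ℤ)}

/-- The increments `τ_k = λ_k - λ_{k-1}`. -/
noncomputable def tau (k : ℕ) (ω : BSeq) : ℕ := lam k ω - lam (k - 1) ω

/-- The auxiliary process `X̃`:  `X̃_{-n} = X_{λ_n - n}` (so that `X̃_{-λ_k}^0 = X_0^{λ_k}`).
Here `tildeX n ω` stands for `X̃_{-n}(ω)`. -/
noncomputable def tildeX (n : ℕ) (ω : BSeq) : Bool := ω ((lam n ω : ℤ) - (n : ℤ))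

/-- The one-sided sequence `X̃_0, X̃_{-1}, X̃_{-2}, …`. -/
noncomputable def tilSeq (ω : BSeq) : ℕ → Bool := fun j => tildeX j ω

/-- The one-sided past `X_0, X_{-1}, X_{-2}, …` of the original process. -/
def past (ω : BSeq) : ℕ → Bool := fun j => ω (-(j : ℤ))

/-- Backward recurrence stopping times `λ̂_k` for a one-sided sequence
`y = (Y_0, Y_{-1}, Y_{-2}, …)` (with `y j = Y_{-j}`):  `λ̂_0 = 0`,
`λ̂_{k+1} = λ̂_k + min {t > 0 : Y_{-λ̂_k - t}^{-t} = Y_{-λ̂_k}^0}`. -/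
noncomputable def hlam : ℕ → (ℕ → Bool) → ℕ
  | 0, _ => 0
  | k + 1, y => hlam k y + sInf {t : ℕ | 0 < t ∧ ∀ i : ℕ, i ≤ hlam k y → y (t + i) = y i}

/-- The backward increments `τ̂_k = λ̂_k - λ̂_{k-1}`. -/
noncomputable def tauhat (k : ℕ) (y : ℕ → Bool) : ℕ := hlam k y - hlam (k - 1) y

/-- The observation map recording the finite data segment `X_0^{L(ω)}`
(coded over `ℕ`, with `2` marking unobserved coordinates). -/
noncomputable def obs (L : BSeq → ℕ) (ω : BSeq) : ℕ → ℕ :=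
  fun n => if n ≤ L ω then (if ω (n : ℤ) then 1 else 0) else 2

/-- The σ-algebra `σ(X_0^{λ_k})`. -/
noncomputable def Fk (k : ℕ) : MeasurableSpace BSeq :=
  MeasurableSpace.comap (obs (lam k)) (inferInstance : MeasurableSpace (ℕ → ℕ))

/-- The σ-algebra `σ(X_0^{λ_k + 1})`. -/
noncomputable def Gk (k : ℕ) : MeasurableSpace BSeq :=
  MeasurableSpace.comap (obs (fun ω => lam k ω + 1)) (inferInstance : MeasurableSpace (ℕ → ℕ))

/-- The output following the `k`-th recurrence: `X_{λ_k + 1}` (as a real number). -/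
noncomputable def Xnext (k : ℕ) (ω : BSeq) : ℝ := if ω ((lam k ω : ℤ) + 1) then 1 else 0

/-- The estimator `P_k = (1/(k-1)) ∑_{j=1}^{k-1} X_{λ_j + 1}`. -/
noncomputable def Pk (k : ℕ) (ω : BSeq) : ℝ :=
  (1 / ((k : ℝ) - 1)) * ∑ j ∈ Finset.Icc 1 (k - 1), Xnext j ω

/-- The conditional probability `Δ_k = P(X_{λ_k+1} = 1 | X_0^{λ_k})`. -/
noncomputable def Delta (μ : Measure BSeq) (k : ℕ) : BSeq → ℝ := μ[Xnext k | Fk k]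

/-- The recurrence time `R(l)` of the length-`(l+1)` past:
`R(l) = min {j ≥ l+1 : X_{-l-j}^{-j} = X_{-l}^0}`. -/
noncomputable def Rrec (l : ℕ) (ω : BSeq) : ℕ :=
  sInf {j : ℕ | l + 1 ≤ j ∧ ∀ i : ℕ, i ≤ l → ω (-(j : ℤ) - (i : ℤ)) = ω (-(i : ℤ))}

/-- The probability of the block `x_0^n`. -/
noncomputable def blockProb (μ : Measure BSeq) (n : ℕ) (x : ℕ → Bool) : ENNReal :=
  μ {ω | ∀ i : ℕ, i ≤ n → ω (i : ℤ) = x i}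

/-- The `n`-th entropy term `-(1/(n+1)) E log₂ p(X_0, …, X_n)`. -/
noncomputable def entropyTerm (μ : Measure BSeq) (n : ℕ) : ℝ :=
  -(1 / ((n : ℝ) + 1)) *
    ∫ ω, Real.logb 2 ((blockProb μ n (fun i => ω (i : ℤ))).toReal) ∂μ

theorem measurable_sInf_nat : Measurable (sInf : Set ℕ → ℕ) := by
  refine measurable_to_countable' fun n => ?_
  have : sInf ⁻¹' {n} = {s : Set ℕ | (n ∈ s ∨ n = 0 ∧ ∀ m, m ∉ s) ∧ ∀ m < n, m ∉ s} := by
    ext s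
    simp only [Set.mem_preimage, Set.mem_singleton_iff, Set.mem_ofPred_eq]
    constructor
    · rintro rfl
      rcases s.eq_empty_or_nonempty with h | h
      · simp [h]
      · exact ⟨.inl (Nat.sInf_mem h), fun m hm => Nat.notMem_of_lt_sInf hm⟩
    · rintro ⟨h | ⟨rfl, h⟩, hlt⟩
      · exact le_antisymm (Nat.sInf_le h) (not_lt.1 fun hc => hlt _ hc (Nat.sInf_mem ⟨n, h⟩))
      · exact Nat.sInf_eq_zero.2 (.inr (Set.eq_empty_iff_forall_notMem.2 h))
  rw [this]
  exact Measurable.setOf (by fun_prop)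

theorem Measurable.apply_index {ι β : Type*} [MeasurableSpace ι] [Countable ι]
    [MeasurableSingletonClass ι] [MeasurableSpace β] {f : (ι → β) → ι} (hf : Measurable f) :
    Measurable fun x : ι → β => x (f x) :=
  (measurable_from_prod_countable_left (f := fun p : (ι → β) × ι => p.1 p.2)
    fun i => measurable_pi_apply i).comp (measurable_id.prodMk hf)

theorem measurable_lam (k : ℕ) : Measurable (lam k) := by
  induction k with
  | zero => exact measurable_const
  | succ k ih =>
    exact ih.add (measurable_sInf_nat.comp (measurable_set_iff.2 fun t => by fun_prop))

theorem measurable_hlam (k : ℕ) : Measurable (hlam k) := by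
  induction k with
  | zero => exact measurable_const
  | succ k ih =>
    exact ih.add (measurable_sInf_nat.comp (measurable_set_iff.2 fun t => by fun_prop))

theorem measurable_past : Measurable past := by
  unfold past; fun_prop

theorem measurable_tilSeq : Measurable tilSeq :=
  measurable_pi_lambda _ fun j =>
    Measurable.apply_index ((measurable_from_top.comp (measurable_lam j)).sub measurable_const)

theorem shift_iterate_apply (t : ℕ) (ω : BSeq) (z : ℤ) : shift^[t] ω z = ω (z + t) := by
  induction t generalizing z with
  | zero => simp
  | succ t ih =>
    rw [Function.iterate_succ_apply', shift, ih]
    exact congrArg ω (by push_cast; ring)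

theorem past_iterate_shift (m : ℕ) (ω : BSeq) (j : ℕ) : past (shift^[m] ω) j = ω (m - j) := by
  rw [past, shift_iterate_apply]
  exact congrArg ω (by ring)

def returnTimes (L : ℕ) (ω : BSeq) : Set ℕ :=
  {t : ℕ | 0 < t ∧ ∀ i : ℕ, i ≤ L → ω ((t : ℤ) + (i : ℤ)) = ω (i : ℤ)}

theorem lam_succ (k : ℕ) (ω : BSeq) :
    lam (k + 1) ω = lam k ω + sInf (returnTimes (lam k ω) ω) := rfl

/-- Read backwards from position `m`, where the block `X_0^{L+d}` ends, a return of `X_0^L` at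
lag `t < d` would be a forward return at lag `d - t`. -/
theorem isLeast_reflected_returnTimes {ω : BSeq} {L d : ℕ} {m : ℤ}
    (hd : IsLeast (returnTimes L ω) d)
    (hblock : ∀ i : ℕ, i ≤ L + d → ω (m - (L + d) + i) = ω i) :
    IsLeast {t : ℕ | 0 < t ∧ ∀ i : ℕ, i ≤ L → ω (m - ↑(t + i)) = ω (m - i)} d := by
  refine ⟨⟨hd.1.1, fun i hi => ?_⟩, fun t ⟨ht0, ht⟩ => ?_⟩
  · calc ω (m - ↑(d + i)) = ω (m - (L + d) + ↑(L - i)) := congrArg ω (by omega)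
      _ = ω ↑(L - i) := hblock _ (by omega)
      _ = ω (d + ↑(L - i)) := (hd.1.2 _ (by omega)).symm
      _ = ω ↑(d + (L - i)) := congrArg ω (by push_cast; ring)
      _ = ω (m - (L + d) + ↑(d + (L - i))) := (hblock _ (by omega)).symm
      _ = ω (m - i) := congrArg ω (by omega)
  · by_contra! hlt
    have hret : d - t ∈ returnTimes L ω := by
      refine ⟨by omega, fun i hi => ?_⟩
      calc ω (↑(d - t) + i) = ω ↑(d - t + i) := congrArg ω (by push_cast; ring)
        _ = ω (m - (L + d) + ↑(d - t + i)) := (hblock _ (by omega)).symm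
        _ = ω (m - ↑(t + (L - i))) := congrArg ω (by omega)
        _ = ω (m - ↑(L - i)) := ht _ (by omega)
        _ = ω (m - (L + d) + ↑(d + i)) := congrArg ω (by omega)
        _ = ω ↑(d + i) := hblock _ (by omega)
        _ = ω (d + i) := congrArg ω (by push_cast; ring)
        _ = ω i := hd.1.2 i hi
    have := hd.2 hret
    omega

def IsRecurrent (ω : BSeq) : Prop := ∀ L : ℕ, (returnTimes L ω).Nonempty

namespace IsRecurrent

variable {ω : BSeq}

theorem isLeast (h : IsRecurrent ω) (L : ℕ) : IsLeast (returnTimes L ω) (sInf (returnTimes L ω)) :=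
  ⟨Nat.sInf_mem (h L), fun _ => Nat.sInf_le⟩

theorem lam_strictMono (h : IsRecurrent ω) : StrictMono (lam · ω) :=
  strictMono_nat_of_lt_succ fun k => by
    have := (h.isLeast (lam k ω)).1.1
    rw [lam_succ]
    omega

theorem lam_block (h : IsRecurrent ω) {j k : ℕ} (hjk : j ≤ k) (i : ℕ) (hi : i ≤ lam j ω) :
    ω (lam k ω - lam j ω + i) = ω i := by
  induction k, hjk using Nat.le_induction with
  | base => exact congrArg ω (by ring)
  | succ k hjk ih =>
    have hjk' : lam j ω ≤ lam k ω := h.lam_strictMono.monotone hjk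
    have hd := (h.isLeast (lam k ω)).1.2
    calc ω (lam (k + 1) ω - lam j ω + i)
        = ω (sInf (returnTimes (lam k ω) ω) + ↑(lam k ω - lam j ω + i)) :=
          congrArg ω (by rw [lam_succ]; push_cast; omega)
      _ = ω ↑(lam k ω - lam j ω + i) := hd _ (by omega)
      _ = ω i := by rw [← ih]; exact congrArg ω (by omega)

theorem tildeX_eq (h : IsRecurrent ω) {j n : ℕ} (hjn : j ≤ n) : tildeX j ω = ω (lam n ω - j) := by
  have hj : j ≤ lam j ω := h.lam_strictMono.id_le j
  calc tildeX j ω = ω ↑(lam j ω - j) := congrArg ω (by omega)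
    _ = ω (lam n ω - j) := by rw [← h.lam_block hjn _ (Nat.sub_le _ _)]; exact congrArg ω (by omega)

theorem hlam_past_iterate_shift (h : IsRecurrent ω) {k n : ℕ} (hkn : k ≤ n) :
    hlam k (past (shift^[lam n ω] ω)) = lam k ω := by
  induction k with
  | zero => rfl
  | succ k ih =>
    have hblock := h.lam_block hkn
    rw [lam_succ] at hblock
    push_cast at hblock
    rw [hlam, ih (by omega), lam_succ]
    simp only [past_iterate_shift]
    rw [(isLeast_reflected_returnTimes (h.isLeast (lam k ω)) hblock).csInf_eq]

end IsRecurrent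

open Topology in
theorem ae_isRecurrent {μ : Measure BSeq} [IsFiniteMeasure μ]
    (hμ : MeasurePreserving shift μ μ) : ∀ᵐ ω ∂μ, IsRecurrent ω := by
  filter_upwards [hμ.conservative.ae_frequently_mem_of_mem_nhds] with ω hω L
  have hU : {ω' : BSeq | ∀ i : ℕ, i ≤ L → ω' i = ω i} ∈ 𝓝 ω :=
    (Set.finite_le_nat L).eventually_all.2 fun i _ =>
      (continuous_apply (i : ℤ)).continuousAt.eventually_mem ((isOpen_discrete {ω i}).mem_nhds rfl)
  obtain ⟨t, hmem, ht⟩ := ((hω _ hU).and_eventually (eventually_gt_atTop 0)).exists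
  refine ⟨t, ht, fun i hi => ?_⟩
  rw [← hmem i hi, shift_iterate_apply, add_comm]

theorem MeasureTheory.MeasurePreserving.measure_le_of_iterate_mem {α : Type*} [MeasurableSpace α]
    {μ : Measure α} {T : α → α} (hT : MeasurePreserving T μ μ) {N τ : α → ℕ}
    (hτ : Measurable τ) {s t : Set α} (ht : MeasurableSet t)
    (h : ∀ᵐ x ∂μ, x ∈ s → T^[N x] x ∈ t ∧ τ (T^[N x] x) = N x) : μ s ≤ μ t := by
  have hpiece : ∀ m, MeasurableSet (t ∩ τ ⁻¹' {m}) := fun m =>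
    ht.inter (hτ (measurableSet_singleton m))
  have hdisj : Pairwise (Function.onFun Disjoint fun m => t ∩ τ ⁻¹' {m}) := fun m m' hm =>
    (pairwise_disjoint_fiber τ hm).mono Set.inter_subset_right Set.inter_subset_right
  calc μ s ≤ μ (⋃ m, T^[m] ⁻¹' (t ∩ τ ⁻¹' {m})) :=
        measure_mono_ae (h.mono fun x hx hxs => Set.mem_iUnion.2 ⟨N x, hx hxs⟩)
    _ ≤ ∑' m, μ (T^[m] ⁻¹' (t ∩ τ ⁻¹' {m})) := measure_iUnion_le _
    _ = ∑' m, μ (t ∩ τ ⁻¹' {m}) :=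
        tsum_congr fun m => (hT.iterate m).measure_preimage (hpiece m).nullMeasurableSet
    _ = μ (⋃ m, t ∩ τ ⁻¹' {m}) := (measure_iUnion hdisj hpiece).symm
    _ ≤ μ t := measure_mono (Set.iUnion_subset fun _ => Set.inter_subset_left)

section Law

variable {μ : Measure BSeq}

theorem measure_tilSeq_preimage_restrict_le [IsFiniteMeasure μ]
    (hμ : MeasurePreserving shift μ μ) (I : Finset ℕ) {B : Set (I → Bool)}
    (hB : MeasurableSet B) :
    μ (tilSeq ⁻¹' (I.restrict ⁻¹' B)) ≤ μ (past ⁻¹' (I.restrict ⁻¹' B)) := by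
  set n := I.sup id
  refine hμ.measure_le_of_iterate_mem (N := lam n) ((measurable_hlam n).comp measurable_past)
    (measurable_past (Finset.measurable_restrict I hB)) ?_
  filter_upwards [ae_isRecurrent hμ] with ω hω hB'
  refine ⟨?_, hω.hlam_past_iterate_shift le_rfl⟩
  have hI : I.restrict (past (shift^[lam n ω] ω)) = I.restrict (tilSeq ω) := by
    funext i
    rw [Finset.restrict, Finset.restrict, past_iterate_shift, tilSeq,
      hω.tildeX_eq (j := i) (Finset.le_sup (f := id) i.2)]
  simpa only [Set.mem_preimage, hI] using hB'

theorem map_restrict_map_tilSeq_eq [IsProbabilityMeasure μ]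
    (hμ : MeasurePreserving shift μ μ) (I : Finset ℕ) :
    (μ.map tilSeq).map I.restrict = (μ.map past).map I.restrict := by
  have hr := Finset.measurable_restrict (X := fun _ : ℕ => Bool) I
  rw [Measure.map_map hr measurable_tilSeq, Measure.map_map hr measurable_past]
  have := Measure.isProbabilityMeasure_map (μ := μ) (hr.comp measurable_tilSeq).aemeasurable
  have := Measure.isProbabilityMeasure_map (μ := μ) (hr.comp measurable_past).aemeasurable
  refine Measure.eq_of_le_of_isProbabilityMeasure (Measure.le_iff.2 fun B hB => ?_)
  rw [Measure.map_apply (hr.comp measurable_tilSeq) hB,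
    Measure.map_apply (hr.comp measurable_past) hB]
  exact measure_tilSeq_preimage_restrict_le hμ I hB

theorem map_tilSeq_eq_map_past [IsProbabilityMeasure μ]
    (hμ : MeasurePreserving shift μ μ) : μ.map tilSeq = μ.map past :=
  IsProjectiveLimit.unique (P := fun I => (μ.map past).map I.restrict)
    (map_restrict_map_tilSeq_eq hμ) fun _ => rfl

theorem map_past_shift_invariant (hμ : MeasurePreserving shift μ μ) :
    (μ.map past).map (fun y j => y (j + 1)) = μ.map past := by
  have hs : Measurable fun y : ℕ → Bool => fun j => y (j + 1) := by fun_prop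
  have hpast : (fun y : ℕ → Bool => fun j => y (j + 1)) ∘ past ∘ shift = past := by
    funext ω j
    exact congrArg ω (by push_cast; ring)
  calc (μ.map past).map (fun y j => y (j + 1))
      = (μ.map shift).map ((fun y : ℕ → Bool => fun j => y (j + 1)) ∘ past) := by
        rw [Measure.map_map hs measurable_past, hμ.map_eq]
    _ = μ.map past := by
        rw [Measure.map_map (hs.comp measurable_past) hμ.measurable]
        exact congrArg (μ.map ·) hpast

end Law

/-- The one-sided process `X̃` has the same finite-dimensional
distributions as `X`: `P(X̃_{-n}^0 = x_{-n}^0) = P(X_{-n}^0 = x_{-n}^0)` for all `n` and `x`;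
in particular `X̃` is stationary (its law is invariant under the one-sided shift). -/
theorem tilde_same_law (μ : Measure BSeq) [IsProbabilityMeasure μ]
    (hstat : MeasurePreserving shift μ μ) :
    (∀ (n : ℕ) (x : ℕ → Bool),
        μ {ω | ∀ i : ℕ, i ≤ n → tilSeq ω i = x i} =
          μ {ω | ∀ i : ℕ, i ≤ n → past ω i = x i}) ∧
      Measure.map (fun y : ℕ → Bool => fun j => y (j + 1)) (Measure.map tilSeq μ) =
        Measure.map tilSeq μ := by
  have hlaw := map_tilSeq_eq_map_past hstat
  refine ⟨fun n x => ?_, by rw [hlaw, map_past_shift_invariant hstat]⟩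
  have hC : MeasurableSet {y : ℕ → Bool | ∀ i : ℕ, i ≤ n → y i = x i} :=
    Measurable.setOf (by fun_prop)
  calc μ {ω | ∀ i : ℕ, i ≤ n → tilSeq ω i = x i}
      = μ.map tilSeq {y | ∀ i : ℕ, i ≤ n → y i = x i} :=
        (Measure.map_apply measurable_tilSeq hC).symm
    _ = μ.map past {y | ∀ i : ℕ, i ≤ n → y i = x i} := by rw [hlaw]
    _ = μ {ω | ∀ i : ℕ, i ≤ n → past ω i = x i} := Measure.map_apply measurable_past hC
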